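/- arXiv:2011.13325 — 3 statements merged into one kernel-verified Lean document; each statement's English description precedes it below -/
import Mathlib

section
/- Let A and B be symmetric positive semidefinite real n×n matrices. Then A(A+B)^†B(A+B)^†A + B(A+B)^†A(A+B)^†B = A(A+B)^†B. -/
open Matrix

/-- The four Penrose conditions characterizing the Moore–Penrose pseudoinverse. -/
def IsMoorePenrose {n : ℕ} (A P : Matrix (Fin n) (Fin n) ℝ) : Prop :=
  A * P * A = A ∧ P * A * P = P ∧ (A * P)ᵀ = A * P ∧ (P * A)ᵀ = P * A

/-!
Positive semidefiniteness gives `ker (A + B) ⊆ ker A`: if `(A + B) x = 0` then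
`x⋆ A x + x⋆ B x = 0` with both terms nonnegative. Hence for `S = A + B` and `S P S = S` we get
`A P S = A = S P A`, so `A P B = A - A P A = B P A`. Writing `X` for this common value,
`A P B P A + B P A P B = X P A + X P B = X P S = A - A P A = X`.
-/

namespace Matrix

open scoped ComplexOrder

variable {ι 𝕜 : Type*} [Fintype ι] [RCLike 𝕜] {A B : Matrix ι ι 𝕜}

theorem PosSemidef.mulVec_eq_zero_of_add_mulVec_eq_zero (hA : A.PosSemidef) (hB : B.PosSemidef)
    {x : ι → 𝕜} (h : (A + B) *ᵥ x = 0) : A *ᵥ x = 0 := by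
  have hsum : star x ⬝ᵥ A *ᵥ x + star x ⬝ᵥ B *ᵥ x = 0 := by
    rw [← dotProduct_add, ← add_mulVec, h, dotProduct_zero]
  have hAx := ((add_eq_zero_iff_of_nonneg (hA.dotProduct_mulVec_nonneg x)
    (hB.dotProduct_mulVec_nonneg x)).mp hsum).1
  exact (hA.dotProduct_mulVec_zero_iff x).mp hAx

theorem PosSemidef.mul_eq_zero_of_add_mul_eq_zero {κ : Type*} [Fintype κ]
    (hA : A.PosSemidef) (hB : B.PosSemidef) {M : Matrix ι κ 𝕜} (h : (A + B) * M = 0) :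
    A * M = 0 := by
  refine ext_iff_mulVec.mpr fun v => ?_
  rw [← mulVec_mulVec, zero_mulVec]
  exact hA.mulVec_eq_zero_of_add_mulVec_eq_zero hB (by rw [mulVec_mulVec, h, zero_mulVec])

theorem PosSemidef.mul_mul_add_eq_self (hA : A.PosSemidef) (hB : B.PosSemidef)
    {P : Matrix ι ι 𝕜} (hP : (A + B) * P * (A + B) = A + B) : A * P * (A + B) = A := by
  classical
  have h : A * (1 - P * (A + B)) = 0 :=
    hA.mul_eq_zero_of_add_mul_eq_zero hB (by rw [mul_sub, mul_one, ← mul_assoc, hP, sub_self])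
  rwa [mul_sub, mul_one, sub_eq_zero, eq_comm, ← mul_assoc] at h

theorem PosSemidef.add_mul_mul_eq_self (hA : A.PosSemidef) (hB : B.PosSemidef)
    {P : Matrix ι ι 𝕜} (hP : (A + B) * P * (A + B) = A + B) : (A + B) * P * A = A := by
  have hS : (A + B)ᴴ = A + B := (hA.add hB).isHermitian
  have hPH : (A + B) * Pᴴ * (A + B) = A + B := by
    simpa only [conjTranspose_mul, hS, mul_assoc] using congrArg (·ᴴ) hP
  simpa only [conjTranspose_mul, conjTranspose_conjTranspose, hS, hA.isHermitian.eq, mul_assoc]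
    using congrArg (·ᴴ) (hA.mul_mul_add_eq_self hB hPH)

end Matrix

theorem harmonic_mean_identity {n : ℕ} (A B P : Matrix (Fin n) (Fin n) ℝ)
    (hA : A.PosSemidef) (hB : B.PosSemidef)
    (hP : IsMoorePenrose (A + B) P) :
    A * P * B * P * A + B * P * A * P * B = A * P * B := by
  have hAS : A * P * (A + B) = A := hA.mul_mul_add_eq_self hB hP.1
  have hSA : (A + B) * P * A = A := hA.add_mul_mul_eq_self hB hP.1
  have hAB : A * P * B = A - A * P * A := by
    rw [eq_sub_iff_add_eq', ← mul_add, hAS]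
  have hBA : B * P * A = A - A * P * A := by
    rw [eq_sub_iff_add_eq', ← add_mul, ← add_mul, hSA]
  calc A * P * B * P * A + B * P * A * P * B
      = (A - A * P * A) * P * (A + B) := by rw [hAB, hBA]; noncomm_ring
    _ = A * P * (A + B) - A * P * (A * P * (A + B)) := by noncomm_ring
    _ = A - A * P * A := by rw [hAS]
    _ = A * P * B := hAB.symm
end

section
/- Let A and B be symmetric positive semidefinite real n×n matrices. Then the harmonic mean H(A,B) := A(A+B)^†B is symmetric, i.e. A(A+B)^†B = B(A+B)^†A and (A(A+B)^†B)^T = A(A+B)^†B. -/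
open Matrix

/-!
Write `S = A + B`. Positive semidefiniteness gives `ker S ⊆ ker A`, since `x⋆ S x = 0` forces
`x⋆ A x = 0`; so every `Q` with `S Q S = S` satisfies `A Q S = A`. Taking `Q = P` and `Q = Pᵀ`
(transposed) gives `A P S = A = S P A`, hence `A P B = A - A P A = B P A`. Finally
`A Pᵀ A = (A P S) Pᵀ (S P A) = A P S P A = A P A`, which is the symmetry.
-/

theorem mul_mul_eq_mul_mul_of_mul_mul_eq {M : Type*} [Semigroup M] {s p q x y : M}
    (hp : p * s * p = p) (hq : s * q * s = s) (hx : x * p * s = x) (hy : s * p * y = y) :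
    x * q * y = x * p * y :=
  calc x * q * y = x * p * (s * q * s) * p * y := by
        conv_lhs => rw [← hx, ← hy]
        simp only [mul_assoc]
    _ = x * (p * s * p) * y := by rw [hq]; simp only [mul_assoc]
    _ = x * p * y := by rw [hp]

namespace Matrix.PosSemidef

open scoped ComplexOrder

variable {n 𝕜 : Type*} [Fintype n] [RCLike 𝕜] {A B : Matrix n n 𝕜}

theorem mulVec_eq_zero_of_add_mulVec_eq_zero_s3 (hA : A.PosSemidef) (hB : B.PosSemidef)
    {x : n → 𝕜} (h : (A + B) *ᵥ x = 0) : A *ᵥ x = 0 := by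
  have hsum : star x ⬝ᵥ A *ᵥ x + star x ⬝ᵥ B *ᵥ x = 0 := by
    rw [← dotProduct_add, ← add_mulVec, h, dotProduct_zero]
  have hA0 := ((add_eq_zero_iff_of_nonneg (hA.dotProduct_mulVec_nonneg x)
    (hB.dotProduct_mulVec_nonneg x)).mp hsum).1
  exact (hA.dotProduct_mulVec_zero_iff x).mp hA0

theorem mul_eq_zero_of_add_mul_eq_zero_s3 {m : Type*} (hA : A.PosSemidef) (hB : B.PosSemidef)
    {N : Matrix n m 𝕜} (h : (A + B) * N = 0) : A * N = 0 := by
  ext i j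
  have hcol : (A + B) *ᵥ (fun k => N k j) = 0 := funext fun k => congrFun₂ h k j
  exact congrFun (hA.mulVec_eq_zero_of_add_mulVec_eq_zero_s3 hB hcol) i

theorem mul_mul_add_eq_of_add_mul_mul_add_eq [DecidableEq n] (hA : A.PosSemidef) (hB : B.PosSemidef)
    {Q : Matrix n n 𝕜} (hQ : (A + B) * Q * (A + B) = A + B) : A * Q * (A + B) = A := by
  have h := hA.mul_eq_zero_of_add_mul_eq_zero_s3 hB (N := 1 - Q * (A + B))
    (by rw [mul_sub, mul_one, ← mul_assoc, hQ, sub_self])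
  rwa [mul_sub, mul_one, ← mul_assoc, sub_eq_zero, eq_comm] at h

end Matrix.PosSemidef

theorem harmonic_mean_symm {n : ℕ} (A B P : Matrix (Fin n) (Fin n) ℝ)
    (hA : A.PosSemidef) (hB : B.PosSemidef)
    (hP : IsMoorePenrose (A + B) P) :
    A * P * B = B * P * A ∧ (A * P * B)ᵀ = A * P * B := by
  obtain ⟨hSPS, hPSP, -, -⟩ := hP
  have hAt : Aᵀ = A := (isHermitian_iff_isSymm.mp hA.isHermitian).eq
  have hSt : (A + B)ᵀ = A + B := by
    rw [transpose_add, hAt, (isHermitian_iff_isSymm.mp hB.isHermitian).eq]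
  have hSPtS : (A + B) * Pᵀ * (A + B) = A + B := by
    simpa only [transpose_mul, hSt, mul_assoc] using congrArg transpose hSPS
  have hAPS : A * P * (A + B) = A := hA.mul_mul_add_eq_of_add_mul_mul_add_eq hB hSPS
  have hSPA : (A + B) * P * A = A := by
    simpa only [transpose_mul, hSt, hAt, transpose_transpose, mul_assoc] using
      congrArg transpose (hA.mul_mul_add_eq_of_add_mul_mul_add_eq hB hSPtS)
  have hAPB : A * P * B = A - A * P * A := by
    rw [eq_sub_iff_add_eq, ← mul_add, add_comm, hAPS]
  have hBPA : B * P * A = A - A * P * A := by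
    rw [eq_sub_iff_add_eq, ← add_mul, ← add_mul, add_comm, hSPA]
  refine ⟨hAPB.trans hBPA.symm, ?_⟩
  rw [hAPB, transpose_sub, transpose_mul, transpose_mul, hAt, ← mul_assoc,
    mul_mul_eq_mul_mul_of_mul_mul_eq hPSP hSPtS hAPS hSPA]
end

section
/- For invertible S, T and symmetric positive semidefinite A, B: inf_w (‖S a - w‖²_A + ‖T b - w‖²_B) = (Sa - Tb)^T A(A+B)^† B (Sa - Tb). -/
open Matrix

section Aux

variable {k : ℕ}

private lemma psd_transpose {M : Matrix (Fin k) (Fin k) ℝ} (h : M.PosSemidef) : Mᵀ = M := by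
  have h' : Mᴴ = M := h.1
  ext i j
  have := congrFun (congrFun h' i) j
  simpa [Matrix.conjTranspose_apply, Matrix.transpose_apply] using this

private lemma psd_nonneg {M : Matrix (Fin k) (Fin k) ℝ} (h : M.PosSemidef) (v : Fin k → ℝ) :
    0 ≤ v ⬝ᵥ M.mulVec v := by
  simpa using h.dotProduct_mulVec_nonneg v

private lemma mp_unique {M P Q : Matrix (Fin k) (Fin k) ℝ}
    (hP : IsMoorePenrose M P) (hQ : IsMoorePenrose M Q) : P = Q := by
  obtain ⟨p1, p2, p3, p4⟩ := hP
  obtain ⟨q1, q2, q3, q4⟩ := hQ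
  have hMP : M * P = M * Q := by
    calc M * P = (M * Q * M) * P := by rw [q1]
    _ = (M * Q) * (M * P) := by noncomm_ring
    _ = (M * Q)ᵀ * (M * P)ᵀ := by rw [q3, p3]
    _ = Qᵀ * (M * P * M)ᵀ := by
        simp only [Matrix.transpose_mul]; noncomm_ring
    _ = Qᵀ * Mᵀ := by rw [p1]
    _ = (M * Q)ᵀ := by rw [Matrix.transpose_mul]
    _ = M * Q := q3
  have hPM : P * M = Q * M := by
    calc P * M = P * (M * Q * M) := by rw [q1]
    _ = (P * M) * (Q * M) := by noncomm_ring
    _ = (P * M)ᵀ * (Q * M)ᵀ := by rw [p4, q4]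
    _ = (M * P * M)ᵀ * Qᵀ := by
        simp only [Matrix.transpose_mul]; noncomm_ring
    _ = Mᵀ * Qᵀ := by rw [p1]
    _ = (Q * M)ᵀ := by rw [Matrix.transpose_mul]
    _ = Q * M := q4
  calc P = P * M * P := p2.symm
  _ = Q * M * P := by rw [hPM]
  _ = Q * (M * P) := Matrix.mul_assoc _ _ _
  _ = Q * (M * Q) := by rw [hMP]
  _ = Q * M * Q := (Matrix.mul_assoc _ _ _).symm
  _ = Q := q2

private lemma mp_transpose {M P : Matrix (Fin k) (Fin k) ℝ} (hM : Mᵀ = M)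
    (h : IsMoorePenrose M P) : IsMoorePenrose M Pᵀ := by
  obtain ⟨p1, p2, p3, p4⟩ := h
  have e1 : M * Pᵀ = P * M := by
    calc M * Pᵀ = Mᵀ * Pᵀ := by rw [hM]
    _ = (P * M)ᵀ := (Matrix.transpose_mul _ _).symm
    _ = P * M := p4
  have e2 : Pᵀ * M = M * P := by
    calc Pᵀ * M = Pᵀ * Mᵀ := by rw [hM]
    _ = (M * P)ᵀ := (Matrix.transpose_mul _ _).symm
    _ = M * P := p3
  refine ⟨?_, ?_, ?_, ?_⟩
  · have hts : (M * Pᵀ * M)ᵀ = M := by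
      simp only [Matrix.transpose_mul, Matrix.transpose_transpose]
      rw [hM, ← Matrix.mul_assoc, p1]
    have := congrArg Matrix.transpose hts
    rw [Matrix.transpose_transpose] at this
    rw [this, hM]
  · have hts : (Pᵀ * M * Pᵀ)ᵀ = P := by
      simp only [Matrix.transpose_mul, Matrix.transpose_transpose]
      rw [hM, ← Matrix.mul_assoc, p2]
    have := congrArg Matrix.transpose hts
    rw [Matrix.transpose_transpose] at this
    rw [this]
  · rw [e1, p4]
  · rw [e2, p3]

private lemma mp_symm {M P : Matrix (Fin k) (Fin k) ℝ} (hM : Mᵀ = M)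
    (h : IsMoorePenrose M P) : Pᵀ = P :=
  mp_unique (mp_transpose hM h) h

private lemma quad_subst (C A : Matrix (Fin k) (Fin k) ℝ) (v : Fin k → ℝ) :
    (C.mulVec v) ⬝ᵥ A.mulVec (C.mulVec v) = v ⬝ᵥ (Cᵀ * A * C).mulVec v := by
  symm
  calc v ⬝ᵥ (Cᵀ * A * C) *ᵥ v = v ⬝ᵥ Cᵀ *ᵥ ((A * C) *ᵥ v) := by
        rw [Matrix.mulVec_mulVec, Matrix.mul_assoc]
  _ = (v ᵥ* Cᵀ) ⬝ᵥ ((A * C) *ᵥ v) := Matrix.dotProduct_mulVec _ _ _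
  _ = (C *ᵥ v) ⬝ᵥ ((A * C) *ᵥ v) := by rw [Matrix.vecMul_transpose]
  _ = (C *ᵥ v) ⬝ᵥ A *ᵥ (C *ᵥ v) := by rw [Matrix.mulVec_mulVec]

private lemma quad_expand {A : Matrix (Fin k) (Fin k) ℝ} (hAT : Aᵀ = A) (u e : Fin k → ℝ) :
    (u + e) ⬝ᵥ A.mulVec (u + e) =
      u ⬝ᵥ A.mulVec u + 2 * (A.mulVec u ⬝ᵥ e) + e ⬝ᵥ A.mulVec e := by
  have h1 : u ⬝ᵥ A *ᵥ e = A *ᵥ u ⬝ᵥ e := by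
    rw [Matrix.dotProduct_mulVec, ← Matrix.mulVec_transpose, hAT]
  have h2 : e ⬝ᵥ A *ᵥ u = A *ᵥ u ⬝ᵥ e := dotProduct_comm _ _
  simp only [Matrix.mulVec_add, dotProduct_add, add_dotProduct, h1, h2]
  ring

/-- Range absorption: for PSD `A, B` and `P` a pseudoinverse of `A + B`,
`(A + B) * P * A = A`. -/
private lemma mp_absorb {A B P : Matrix (Fin k) (Fin k) ℝ} (hA : A.PosSemidef)
    (hB : B.PosSemidef) (hP : IsMoorePenrose (A + B) P) : (A + B) * P * A = A := by
  obtain ⟨p1, p2, p3, p4⟩ := hP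
  set M := A + B with hMdef
  set N : Matrix (Fin k) (Fin k) ℝ := 1 - M * P with hNdef
  have hNM : N * M = 0 := by
    rw [hNdef, Matrix.sub_mul, Matrix.one_mul, p1, sub_self]
  have hsum : N * A * Nᵀ + N * B * Nᵀ = 0 := by
    have h0 : N * M * Nᵀ = 0 := by rw [hNM, Matrix.zero_mul]
    calc N * A * Nᵀ + N * B * Nᵀ = N * (A + B) * Nᵀ := by noncomm_ring
    _ = 0 := h0
  open scoped MatrixOrder in set L := CFC.sqrt A with hLdef
  have hLL : L * L = A := by open scoped MatrixOrder in exact CFC.sqrt_mul_sqrt_self A hA.nonneg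
  have hLT : Lᵀ = L := by open scoped MatrixOrder in exact psd_transpose (CFC.sqrt_nonneg A).posSemidef
  have hkey : ∀ x : Fin k → ℝ, (L * Nᵀ).mulVec x = 0 := by
    intro x
    have hqa : x ⬝ᵥ (N * A * Nᵀ).mulVec x =
        ((L * Nᵀ).mulVec x) ⬝ᵥ ((L * Nᵀ).mulVec x) := by
      have hNA : N * A * Nᵀ = (L * Nᵀ)ᵀ * 1 * (L * Nᵀ) := by
        rw [Matrix.transpose_mul, hLT, Matrix.transpose_transpose, Matrix.mul_one]
        calc N * A * Nᵀ = N * (L * L) * Nᵀ := by rw [hLL]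
        _ = N * L * (L * Nᵀ) := by noncomm_ring
      rw [hNA, ← quad_subst, Matrix.one_mulVec]
    have hqb : 0 ≤ x ⬝ᵥ (N * B * Nᵀ).mulVec x := by
      have hct : Nᴴ = Nᵀ := by
        ext i j; simp [Matrix.conjTranspose_apply, Matrix.transpose_apply]
      have hBpsd : (N * B * Nᵀ).PosSemidef := by
        have := hB.mul_mul_conjTranspose_same N
        rwa [hct] at this
      exact psd_nonneg hBpsd x
    have hzero : x ⬝ᵥ (N * A * Nᵀ).mulVec x + x ⬝ᵥ (N * B * Nᵀ).mulVec x = 0 := by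
      rw [← dotProduct_add, ← Matrix.add_mulVec, hsum, Matrix.zero_mulVec, dotProduct_zero]
    have hqa' : 0 ≤ x ⬝ᵥ (N * A * Nᵀ).mulVec x := by
      rw [hqa]
      have := dotProduct_self_star_nonneg ((L * Nᵀ).mulVec x)
      simpa using this
    have hz : x ⬝ᵥ (N * A * Nᵀ).mulVec x = 0 := le_antisymm (by linarith) hqa'
    rw [hqa] at hz
    exact dotProduct_self_eq_zero.mp hz
  have hC : L * Nᵀ = 0 := by
    ext i j
    have := congrFun (hkey (Pi.single j 1)) i
    simpa using this
  have hNA : N * A = 0 := by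
    have hCt : (L * Nᵀ)ᵀ = 0 := by rw [hC, Matrix.transpose_zero]
    rw [Matrix.transpose_mul, Matrix.transpose_transpose, hLT] at hCt
    calc N * A = N * (L * L) := by rw [hLL]
    _ = (N * L) * L := (Matrix.mul_assoc _ _ _).symm
    _ = 0 := by rw [hCt, Matrix.zero_mul]
  rw [hNdef, Matrix.sub_mul, Matrix.one_mul, sub_eq_zero] at hNA
  exact hNA.symm

end Aux

theorem pair_aggregate_measure {k : ℕ}
    (S T A B Pd : Matrix (Fin k) (Fin k) ℝ)
    (hS : IsUnit S.det) (hT : IsUnit T.det)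
    (hA : A.PosSemidef) (hB : B.PosSemidef)
    (hP : IsMoorePenrose (A + B) Pd) (a b : Fin k → ℝ) :
    (⨅ w : Fin k → ℝ,
        (S.mulVec a - w) ⬝ᵥ A.mulVec (S.mulVec a - w) +
          (T.mulVec b - w) ⬝ᵥ B.mulVec (T.mulVec b - w)) =
      (S.mulVec a - T.mulVec b) ⬝ᵥ
        (A * Pd * B).mulVec (S.mulVec a - T.mulVec b) := by
  have hAT : Aᵀ = A := psd_transpose hA
  have hBT : Bᵀ = B := psd_transpose hB
  have hMpsd : (A + B).PosSemidef := hA.add hB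
  have hMT : (A + B)ᵀ = A + B := psd_transpose hMpsd
  have hPdT : Pdᵀ = Pd := mp_symm hMT hP
  have hPMP : Pd * (A + B) * Pd = Pd := hP.2.1
  have hMA : (A + B) * Pd * A = A := mp_absorb hA hB hP
  have hMB : (A + B) * Pd * B = B := by
    have h' : IsMoorePenrose (B + A) Pd := by rwa [add_comm B A]
    have := mp_absorb hB hA h'
    rwa [add_comm B A] at this
  set M := A + B with hMdef
  have hsub : A = M - B := by rw [hMdef]; noncomm_ring
  have hApB : A * Pd * B = B - B * Pd * B := by
    calc A * Pd * B = (M - B) * Pd * B := by rw [← hsub]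
    _ = M * Pd * B - B * Pd * B := by noncomm_ring
    _ = B - B * Pd * B := by rw [hMB]
  have hkey : (B * Pd) * A * (Pd * B) + (B * Pd - 1) * B * (Pd * B - 1) = A * Pd * B := by
    have e1 : (B * Pd) * A * (Pd * B) + (B * Pd - 1) * B * (Pd * B - 1) =
        B * (Pd * M * Pd) * B - (B * Pd * B + B * Pd * B) + B := by
      rw [hsub]; noncomm_ring
    rw [e1, hPMP, hApB]; noncomm_ring
  set x := S.mulVec a with hx
  set y := T.mulVec b with hy
  set d := x - y with hd
  set p := (Pd * B).mulVec d with hp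
  set wstar := x - p with hws
  set c := d ⬝ᵥ (A * Pd * B).mulVec d with hc
  have hid : ∀ w : Fin k → ℝ,
      (x - w) ⬝ᵥ A.mulVec (x - w) + (y - w) ⬝ᵥ B.mulVec (y - w) =
        c + (wstar - w) ⬝ᵥ M.mulVec (wstar - w) := by
    intro w
    have hxw : x - w = p + (wstar - w) := by rw [hws]; abel
    have hyw : y - w = (p - d) + (wstar - w) := by rw [hws, hd]; abel
    rw [hxw, hyw, quad_expand hAT, quad_expand hBT]
    have hcross : A.mulVec p + B.mulVec (p - d) = 0 := by
      have h' : A.mulVec p + B.mulVec (p - d) = M.mulVec p - B.mulVec d := by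
        rw [Matrix.mulVec_sub, hMdef, Matrix.add_mulVec]; abel
      rw [h', hp, Matrix.mulVec_mulVec, ← Matrix.mul_assoc, hMB, sub_self]
    have hval : p ⬝ᵥ A.mulVec p + (p - d) ⬝ᵥ B.mulVec (p - d) = c := by
      have hpd : p - d = ((Pd * B) - 1).mulVec d := by
        rw [Matrix.sub_mulVec, Matrix.one_mulVec, hp]
      rw [hp, hpd, quad_subst, quad_subst]
      have ht1 : (Pd * B)ᵀ = B * Pd := by rw [Matrix.transpose_mul, hBT, hPdT]
      have ht2 : ((Pd * B) - 1)ᵀ = B * Pd - 1 := by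
        rw [Matrix.transpose_sub, Matrix.transpose_one, ht1]
      rw [ht1, ht2, hc, ← dotProduct_add, ← Matrix.add_mulVec, hkey]
    have h2 : A.mulVec p ⬝ᵥ (wstar - w) + B.mulVec (p - d) ⬝ᵥ (wstar - w) = 0 := by
      rw [← add_dotProduct, hcross, zero_dotProduct]
    have hM2 : (wstar - w) ⬝ᵥ A.mulVec (wstar - w) + (wstar - w) ⬝ᵥ B.mulVec (wstar - w) =
        (wstar - w) ⬝ᵥ M.mulVec (wstar - w) := by
      rw [hMdef, Matrix.add_mulVec, dotProduct_add]
    linarith [hval, h2, hM2]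
  have hlb : ∀ w : Fin k → ℝ,
      c ≤ (x - w) ⬝ᵥ A.mulVec (x - w) + (y - w) ⬝ᵥ B.mulVec (y - w) := by
    intro w
    rw [hid w]
    have := psd_nonneg hMpsd (wstar - w)
    linarith
  have hvalstar : (x - wstar) ⬝ᵥ A.mulVec (x - wstar) +
      (y - wstar) ⬝ᵥ B.mulVec (y - wstar) = c := by
    rw [hid wstar]
    simp
  apply le_antisymm
  · calc (⨅ w : Fin k → ℝ, (x - w) ⬝ᵥ A.mulVec (x - w) + (y - w) ⬝ᵥ B.mulVec (y - w)) ≤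
        (x - wstar) ⬝ᵥ A.mulVec (x - wstar) + (y - wstar) ⬝ᵥ B.mulVec (y - wstar) := by
          apply ciInf_le
          exact ⟨c, by rintro r ⟨w, rfl⟩; exact hlb w⟩
    _ = c := hvalstar
  · exact le_ciInf hlb
end
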